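/- Let α = (α₁, α₂, α₃, α₄) ∈ ℂ⁴ belong to the class 𝒜 and suppose α₂ ≠ 0. Set a := α₄·α₂⁻¹, b := α₁·α₂⁻¹, and c := −(conj(α₂))⁻¹. Then a, b ∈ ℝ, c ≠ 0, and α₃ = (|c|² − a·b)/conj(c). Conversely, given arbitrary a, b ∈ ℝ and c ∈ ℂ with c ≠ 0, the vector α₁ := −b/conj(c), α₂ := −1/conj(c), α₃ := (|c|² − a·b)/conj(c), α₄ := −a/conj(c) belongs to the class 𝒜. -/

import Mathlib

open ComplexConjugate

/-- The vector `(α₁, α₂, α₃, α₄)` belongs to the class 𝒜 of the paper: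
(𝒜1) `α₁ conj α₄ - conj α₂ α₃ = 1`, (𝒜2) `α₁ conj α₃, α₂ conj α₄ ∈ ℝ`. -/
def ClassA (α₁ α₂ α₃ α₄ : ℂ) : Prop :=
  α₁ * conj α₄ - conj α₂ * α₃ = 1 ∧ (α₁ * conj α₃).im = 0 ∧ (α₂ * conj α₄).im = 0

namespace Complex

theorem im_mul_conj_swap (z w : ℂ) : (w * conj z).im = -(z * conj w).im := by
  simp only [mul_im, conj_re, conj_im]
  ring

theorem conj_mul_eq_of_im_mul_conj_eq_zero {z w : ℂ} (h : (z * conj w).im = 0) :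
    conj z * w = z * conj w := by
  simpa only [map_mul, conj_conj] using conj_eq_iff_im.2 h

theorem im_mul_inv_eq_zero_iff (z w : ℂ) : (z * w⁻¹).im = 0 ↔ (z * conj w).im = 0 := by
  rcases eq_or_ne w 0 with rfl | hw
  · simp
  rw [inv_def, ← mul_assoc, im_mul_ofReal, mul_eq_zero,
    or_iff_left (inv_ne_zero (normSq_pos.2 hw).ne')]

end Complex

open Complex

namespace ClassA

variable {α₁ α₂ α₃ α₄ : ℂ}

/-- Subtracting `conj (α₁ conj α₂) · (𝒜1)` from `α₁ conj α₂ · conj (𝒜1)` writes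
`2i Im (α₁ conj α₂)` as `|α₁|² · 2i Im (conj α₂ α₄) - |α₂|² · 2i Im (α₁ conj α₃)`, which vanishes
by (𝒜2). -/
theorem im_mul_conj_eq_zero (h : ClassA α₁ α₂ α₃ α₄) : (α₁ * conj α₂).im = 0 := by
  obtain ⟨hunit, h₁₃, h₂₄⟩ := h
  have hunit' : conj α₁ * α₄ - α₂ * conj α₃ = 1 := by
    simpa only [map_sub, map_mul, map_one, conj_conj] using congrArg conj hunit
  rw [← conj_eq_iff_im, map_mul, conj_conj]
  linear_combination (-(α₂ * conj α₂)) * conj_mul_eq_of_im_mul_conj_eq_zero h₁₃ -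
    (α₁ * conj α₁) * conj_mul_eq_of_im_mul_conj_eq_zero h₂₄ + (α₁ * conj α₂) * hunit' -
    (conj α₁ * α₂) * hunit

theorem eq_mul_div_sub_inv_conj (h : ClassA α₁ α₂ α₃ α₄) (hα₂ : α₂ ≠ 0) :
    α₃ = α₁ * α₄ / α₂ - (conj α₂)⁻¹ := by
  obtain ⟨hunit, -, h₂₄⟩ := h
  have hc₂ : conj α₂ ≠ 0 := (map_ne_zero conj).2 hα₂
  field_simp
  linear_combination -α₂ * hunit - α₁ * conj_mul_eq_of_im_mul_conj_eq_zero h₂₄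

end ClassA

theorem classA_div_conj (a b : ℝ) {c : ℂ} (hc : c ≠ 0) :
    ClassA (-(b : ℂ) / conj c) (-1 / conj c) ((((‖c‖ : ℝ) : ℂ) ^ 2 - (a : ℂ) * (b : ℂ)) / conj c)
      (-(a : ℂ) / conj c) := by
  have hc' : conj c ≠ 0 := (map_ne_zero conj).2 hc
  simp only [ClassA, ← conj_eq_iff_im, ← mul_conj', map_div₀, map_mul, map_neg, map_one,
    map_sub, conj_conj, conj_ofReal]
  refine ⟨?_, ?_, ?_⟩ <;> field_simp
  ring

/-- The Remark of the paper identifying `BC(α)` with the Exner–Grosse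
point-interaction boundary condition: if `α ∈ 𝒜` and `α₂ ≠ 0` then
`a := α₄ α₂⁻¹` and `b := α₁ α₂⁻¹` are real, `c := -(conj α₂)⁻¹ ≠ 0`, and
`α₃ = (|c|² - ab)/conj c`; conversely, for any real `a, b` and nonzero
`c ∈ ℂ`, the vector `(-b/conj c, -1/conj c, (|c|² - ab)/conj c, -a/conj c)`
belongs to 𝒜. -/
theorem stmt18 :
    (∀ α₁ α₂ α₃ α₄ : ℂ, ClassA α₁ α₂ α₃ α₄ → α₂ ≠ 0 →
      (α₄ * α₂⁻¹).im = 0 ∧ (α₁ * α₂⁻¹).im = 0 ∧ -(conj α₂)⁻¹ ≠ (0 : ℂ) ∧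
      α₃ = ((((‖-(conj α₂)⁻¹‖ : ℝ) : ℂ) ^ 2 -
          (α₄ * α₂⁻¹) * (α₁ * α₂⁻¹)) / conj (-(conj α₂)⁻¹))) ∧
    (∀ (a b : ℝ) (c : ℂ), c ≠ 0 →
      ClassA (-(b : ℂ) / conj c) (-1 / conj c)
        ((((‖c‖ : ℝ) : ℂ) ^ 2 - (a : ℂ) * (b : ℂ)) / conj c)
        (-(a : ℂ) / conj c)) := by
  refine ⟨fun α₁ α₂ α₃ α₄ h hα₂ => ?_, fun a b c hc => classA_div_conj a b hc⟩
  have hc₂ : conj α₂ ≠ 0 := (map_ne_zero conj).2 hα₂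
  refine ⟨(im_mul_inv_eq_zero_iff _ _).2 ?_, (im_mul_inv_eq_zero_iff _ _).2 h.im_mul_conj_eq_zero,
    neg_ne_zero.2 (inv_ne_zero hc₂), ?_⟩
  · rw [im_mul_conj_swap, h.2.2, neg_zero]
  · rw [← mul_conj', h.eq_mul_div_sub_inv_conj hα₂]
    simp only [map_neg, map_inv₀, conj_conj]
    field_simp
    ring
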